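/- arXiv:2105.00156 — 4 statements merged into one kernel-verified Lean document; each statement's English description precedes it below -/
import Mathlib

section
/- Let S = K(ξ)[z^{±1/r}] be the ring of Laurent polynomials over K(ξ) (char K ≠ r, ξ a primitive r-th root of unity) and σ' the K(ξ)-algebra automorphism sending z^{n/r} to ξ^{-n} z^{n/r}. Then the set 𝔄 = {(χ¹,χ²) ∈ S × S : χ¹·σ'(χ¹) = χ² + σ'(χ²)} is a group under the operation (χ¹,χ²) ∔ (φ¹,φ²) = (χ¹+φ¹, χ²+φ²+σ'(χ¹)φ¹), with identity (0,0) and inverse of (χ¹,χ²) equal to (−χ¹, σ'(χ²)). -/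
/-- For `S = K(ξ)[z^{±1/r}]` (realized as the Laurent polynomial ring
`AddMonoidAlgebra F ℤ` over `F = K(ξ)`, with `z^{n/r}` the monomial `single n 1`) and
`σ'` the `K(ξ)`-algebra automorphism sending `z^{n/r}` to `ξ^{-n} z^{n/r}`, the set
`𝔄 = {(χ¹,χ²) : χ¹ σ'(χ¹) = χ² + σ'(χ²)}` is a group under
`(χ¹,χ²) ∔ (φ¹,φ²) = (χ¹+φ¹, χ²+φ²+σ'(χ¹)φ¹)`, with identity `(0,0)` and
inverse of `(χ¹,χ²)` equal to `(−χ¹, σ'(χ²))`. -/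
theorem stmt0
    (K F : Type*) [Field K] [Field F] [Algebra K F]
    (r : ℕ) (hr : r ∈ ({1, 2, 3} : Set ℕ)) (hchar : ringChar K ≠ r)
    (ξ : F) (hξ : IsPrimitiveRoot ξ r)
    (hF : Algebra.adjoin K {ξ} = ⊤)
    (σ' : AddMonoidAlgebra F ℤ ≃+* AddMonoidAlgebra F ℤ)
    (hσalg : ∀ a : F, σ' (AddMonoidAlgebra.single 0 a) = AddMonoidAlgebra.single 0 a)
    (hσT : ∀ n : ℤ, σ' (AddMonoidAlgebra.single n 1) = AddMonoidAlgebra.single n (ξ ^ (-n)))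
    (hσinv : ∀ s, σ' (σ' s) = s)
    (𝔄 : Set (AddMonoidAlgebra F ℤ × AddMonoidAlgebra F ℤ))
    (h𝔄 : 𝔄 = {χ | χ.1 * σ' χ.1 = χ.2 + σ' χ.2}) :
    -- closure under the operation ∔
    (∀ χ ∈ 𝔄, ∀ φ ∈ 𝔄,
        (χ.1 + φ.1, χ.2 + φ.2 + σ' χ.1 * φ.1) ∈ 𝔄) ∧
    -- the unit (0,0) belongs to 𝔄 and is a two-sided identity
    (((0, 0) : AddMonoidAlgebra F ℤ × AddMonoidAlgebra F ℤ) ∈ 𝔄) ∧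
    (∀ χ : AddMonoidAlgebra F ℤ × AddMonoidAlgebra F ℤ,
        (χ.1 + 0, χ.2 + 0 + σ' χ.1 * 0) = χ ∧ (0 + χ.1, 0 + χ.2 + σ' 0 * χ.1) = χ) ∧
    -- inverses
    (∀ χ ∈ 𝔄, (-χ.1, σ' χ.2) ∈ 𝔄 ∧
        (χ.1 + -χ.1, χ.2 + σ' χ.2 + σ' χ.1 * (-χ.1)) =
          ((0, 0) : AddMonoidAlgebra F ℤ × AddMonoidAlgebra F ℤ) ∧
        (-χ.1 + χ.1, σ' χ.2 + χ.2 + σ' (-χ.1) * χ.1) =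
          ((0, 0) : AddMonoidAlgebra F ℤ × AddMonoidAlgebra F ℤ)) ∧
    -- associativity
    (∀ χ φ ψ : AddMonoidAlgebra F ℤ × AddMonoidAlgebra F ℤ,
        ((χ.1 + φ.1) + ψ.1, (χ.2 + φ.2 + σ' χ.1 * φ.1) + ψ.2 + σ' (χ.1 + φ.1) * ψ.1) =
        (χ.1 + (φ.1 + ψ.1), χ.2 + (φ.2 + ψ.2 + σ' φ.1 * ψ.1) + σ' χ.1 * (φ.1 + ψ.1))) := by
  subst h𝔄
  refine ⟨?_, ?_, ?_, ?_, ?_⟩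
  · intro χ hχ φ hφ
    simp only [Set.mem_setOf_eq] at *
    simp only [map_add, map_mul, hσinv]
    rw [add_mul, mul_add, mul_add,
      show χ.1 * σ' χ.1 + χ.1 * σ' φ.1 + (φ.1 * σ' χ.1 + φ.1 * σ' φ.1)
        = (χ.1 * σ' χ.1) + (φ.1 * σ' φ.1) + (σ' χ.1 * φ.1 + χ.1 * σ' φ.1) by ring,
      hχ, hφ]
    ring
  · simp
  · intro χ; constructor <;> simp
  · intro χ hχ
    simp only [Set.mem_setOf_eq] at hχ
    refine ⟨?_, ?_, ?_⟩
    · simp only [Set.mem_setOf_eq, map_neg, hσinv, neg_mul, mul_neg, neg_neg]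
      rw [hχ]; ring
    · simp only [Prod.mk.injEq, add_neg_cancel, mul_neg, true_and]
      rw [← hχ]; ring
    · simp only [Prod.mk.injEq, neg_add_cancel, map_neg, neg_mul, true_and]
      rw [show σ' χ.2 + χ.2 = χ.1 * σ' χ.1 by rw [add_comm, hχ]]; ring
  · intro χ φ ψ
    simp only [Prod.mk.injEq, map_add, add_assoc, true_and]
    ring
end

section
/- With S, σ', and the group 𝔄 as above, the rule s ⇀ (χ¹,χ²) := (s·χ¹, s·σ'(s)·χ²) defines an action of the multiplicative monoid of S on 𝔄 by group endomorphisms; in particular s ⇀ (χ ∔ φ) = (s ⇀ χ) ∔ (s ⇀ φ) for all s ∈ S and χ, φ ∈ 𝔄. -/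
/-- With `S = K(ξ)[z^{±1/r}]` (realized as `AddMonoidAlgebra F ℤ` over
`F = K(ξ)`, with `z^{n/r} = single n 1`), `σ'` the `K(ξ)`-algebra automorphism with
`σ'(z^{n/r}) = ξ^{-n} z^{n/r}`, and the group `𝔄` with operation
`(χ¹,χ²) ∔ (φ¹,φ²) = (χ¹+φ¹, χ²+φ²+σ'(χ¹)φ¹)`, the rule
`s ⇀ (χ¹,χ²) := (s·χ¹, s·σ'(s)·χ²)` defines an action of the multiplicative monoid of
`S` on `𝔄` by group endomorphisms; in particular `s ⇀ (χ ∔ φ) = (s ⇀ χ) ∔ (s ⇀ φ)`. -/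
theorem stmt1
    (K F : Type*) [Field K] [Field F] [Algebra K F]
    (r : ℕ) (hr : r ∈ ({1, 2, 3} : Set ℕ)) (hchar : ringChar K ≠ r)
    (ξ : F) (hξ : IsPrimitiveRoot ξ r)
    (hF : Algebra.adjoin K {ξ} = ⊤)
    (σ' : AddMonoidAlgebra F ℤ ≃+* AddMonoidAlgebra F ℤ)
    (hσalg : ∀ a : F, σ' (AddMonoidAlgebra.single 0 a) = AddMonoidAlgebra.single 0 a)
    (hσT : ∀ n : ℤ, σ' (AddMonoidAlgebra.single n 1) = AddMonoidAlgebra.single n (ξ ^ (-n)))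
    (hσinv : ∀ s, σ' (σ' s) = s)
    (𝔄 : Set (AddMonoidAlgebra F ℤ × AddMonoidAlgebra F ℤ))
    (h𝔄 : 𝔄 = {χ | χ.1 * σ' χ.1 = χ.2 + σ' χ.2})
    (act : AddMonoidAlgebra F ℤ →
      AddMonoidAlgebra F ℤ × AddMonoidAlgebra F ℤ →
      AddMonoidAlgebra F ℤ × AddMonoidAlgebra F ℤ)
    (hact : ∀ s χ, act s χ = (s * χ.1, s * σ' s * χ.2)) :
    -- the action preserves 𝔄
    (∀ s : AddMonoidAlgebra F ℤ, ∀ χ ∈ 𝔄, act s χ ∈ 𝔄) ∧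
    -- monoid action axioms
    (∀ χ : AddMonoidAlgebra F ℤ × AddMonoidAlgebra F ℤ, act 1 χ = χ) ∧
    (∀ s t : AddMonoidAlgebra F ℤ, ∀ χ : AddMonoidAlgebra F ℤ × AddMonoidAlgebra F ℤ,
        act (s * t) χ = act s (act t χ)) ∧
    -- each `s ⇀ ·` is a group endomorphism of (𝔄, ∔):
    (∀ s : AddMonoidAlgebra F ℤ, ∀ χ φ : AddMonoidAlgebra F ℤ × AddMonoidAlgebra F ℤ,
        act s (χ.1 + φ.1, χ.2 + φ.2 + σ' χ.1 * φ.1) =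
          ((act s χ).1 + (act s φ).1,
           (act s χ).2 + (act s φ).2 + σ' (act s χ).1 * (act s φ).1)) ∧
    (∀ s : AddMonoidAlgebra F ℤ, act s (0, 0) = (0, 0)) := by
  subst h𝔄
  refine ⟨?_, ?_, ?_, ?_, ?_⟩
  · intro s χ hχ
    simp only [Set.mem_setOf_eq, hact] at hχ ⊢
    rw [map_mul, map_mul, map_mul, hσinv]
    linear_combination s * σ' s * hχ
  · intro χ
    simp [hact]
  · intro s t χ
    simp only [hact, map_mul]
    exact Prod.ext (by ring) (by ring)
  · intro s χ φ
    simp only [hact, map_mul]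
    exact Prod.ext (by ring) (by ring)
  · intro s
    simp [hact]
end

section
/- Let C = (s_{ij}) ∈ SU₃(S) with S = K[z^{±1/2}], σ'(z^{n/2}) = (−1)^n z^{n/2}. Write s_{11}, s_{21}, s_{31} as Laurent polynomials in z^{1/2} with top degrees M, M', M'' and leading coefficients ν_M, ι_{M'}, μ_{M''}, all assumed nonzero, and suppose M = M''. Then the unitarity relation s_{21}σ'(s_{21}) = s_{31}σ'(s_{11}) + σ'(s_{31})s_{11} forces M' = M and ι_M² = 2 ν_M μ_M. -/
open Matrix

lemma mul_coeff_aux {K : Type*} [Field K] (f g : AddMonoidAlgebra K ℤ) (d e n : ℤ)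
    (hf : ∀ m : ℤ, d < m → f.coeff m = 0) (hg : ∀ m : ℤ, e < m → g.coeff m = 0)
    (hn : d + e ≤ n) :
    (f * g).coeff n = if n = d + e then f.coeff d * g.coeff e else 0 := by
  classical
  have hfs : ∀ a ∈ f.coeff.support, a ≤ d := fun a ha => by
    by_contra h; exact (Finsupp.mem_support_iff.mp ha) (hf a (lt_of_not_ge h))
  have hgs : ∀ b ∈ g.coeff.support, b ≤ e := fun b hb => by
    by_contra h; exact (Finsupp.mem_support_iff.mp hb) (hg b (lt_of_not_ge h))
  rw [AddMonoidAlgebra.coeff_mul, Finsupp.sum]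
  simp only [Finsupp.sum]
  rcases eq_or_lt_of_le hn with h | h
  · rw [if_pos h.symm]
    subst h
    rw [Finset.sum_eq_single d]
    · rw [Finset.sum_eq_single e]
      · simp
      · intro b hb hbe
        rw [if_neg]; omega
      · intro he
        simp [Finsupp.notMem_support_iff.mp he]
    · intro a ha had
      apply Finset.sum_eq_zero
      intro b hb
      have := hfs a ha
      have := hgs b hb
      rw [if_neg]; omega
    · intro hd
      apply Finset.sum_eq_zero
      intro b hb
      have := hgs b hb
      split
      · simp [Finsupp.notMem_support_iff.mp hd]
      · rfl
  · rw [if_neg (by omega)]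
    apply Finset.sum_eq_zero
    intro a ha
    apply Finset.sum_eq_zero
    intro b hb
    have := hfs a ha
    have := hgs b hb
    rw [if_neg]; omega

/-- Let `C = (s_{ij}) ∈ SU₃(S)` with `S = K[z^{±1/2}]` (realized as
`AddMonoidAlgebra K ℤ`, `z^{n/2} = single n 1`) and `σ'` the involution
`(σ' s)ₙ = (−1)ⁿ sₙ`.  If the first-column entries `s₁₁, s₂₁, s₃₁` have top degrees
`M, M', M''` with nonzero leading coefficients, and `M = M''`, then the unitarity relation
`s₂₁σ'(s₂₁) = s₃₁σ'(s₁₁) + σ'(s₃₁)s₁₁` (which holds since `C ∈ SU₃(S)`) forces `M' = M`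
and `ι_M² = 2 ν_M μ_M` (squares of the leading coefficient of `s₂₁` versus the product of
those of `s₁₁` and `s₃₁`). -/
theorem stmt11
    (K : Type*) [Field K] (hch : (2 : K) ≠ 0)
    (σ' : AddMonoidAlgebra K ℤ ≃+* AddMonoidAlgebra K ℤ)
    (hσ : ∀ (s : AddMonoidAlgebra K ℤ) (n : ℤ), (σ' s).coeff n = (-1 : K) ^ n * s.coeff n)
    (J : Matrix (Fin 3) (Fin 3) (AddMonoidAlgebra K ℤ))
    (hJ : J = !![0, 0, -1; 0, 1, 0; -1, 0, 0])
    (C : Matrix (Fin 3) (Fin 3) (AddMonoidAlgebra K ℤ))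
    (hdet : C.det = 1)
    (hC : Cᵀ * J * C.map σ' = J)
    (M M' M'' : ℤ)
    -- s₁₁ = C 0 0 has top degree M with nonzero leading coefficient ν_M, etc.
    (h11top : (C 0 0).coeff M ≠ 0) (h11 : ∀ n : ℤ, M < n → (C 0 0).coeff n = 0)
    (h21top : (C 1 0).coeff M' ≠ 0) (h21 : ∀ n : ℤ, M' < n → (C 1 0).coeff n = 0)
    (h31top : (C 2 0).coeff M'' ≠ 0) (h31 : ∀ n : ℤ, M'' < n → (C 2 0).coeff n = 0)
    (hMM : M = M'') :
    M' = M ∧ ((C 1 0).coeff M') ^ 2 = 2 * ((C 0 0).coeff M * (C 2 0).coeff M) := by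
  subst hMM
  -- the unitarity relation from the (0,0) entry of the defining equation
  have hrel : C 1 0 * σ' (C 1 0) = C 0 0 * σ' (C 2 0) + C 2 0 * σ' (C 0 0) := by
    have h00 := congrFun (congrFun hC 0) 0
    simp [Matrix.mul_apply, Fin.sum_univ_three, hJ, Matrix.transpose_apply,
      Matrix.map_apply] at h00
    linear_combination h00
  -- coefficient bounds for the σ'-images
  have hs11 : ∀ n : ℤ, M < n → (σ' (C 0 0)).coeff n = 0 := fun n hn => by
    rw [hσ, h11 n hn, mul_zero]
  have hs21 : ∀ n : ℤ, M' < n → (σ' (C 1 0)).coeff n = 0 := fun n hn => by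
    rw [hσ, h21 n hn, mul_zero]
  have hs31 : ∀ n : ℤ, M < n → (σ' (C 2 0)).coeff n = 0 := fun n hn => by
    rw [hσ, h31 n hn, mul_zero]
  have key : ∀ n : ℤ, (C 1 0 * σ' (C 1 0)).coeff n
      = (C 0 0 * σ' (C 2 0)).coeff n + (C 2 0 * σ' (C 0 0)).coeff n := fun n => by
    rw [hrel]; exact Finsupp.add_apply _ _ _
  have hεM : ((-1 : K) ^ M) ≠ 0 := zpow_ne_zero _ (by norm_num)
  have hεM' : ((-1 : K) ^ M') ≠ 0 := zpow_ne_zero _ (by norm_num)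
  -- M' ≤ M
  have hle : M' ≤ M := by
    by_contra h
    push_neg at h
    have hk := key (M' + M')
    rw [mul_coeff_aux _ _ M' M' _ h21 hs21 le_rfl, if_pos rfl,
      mul_coeff_aux _ _ M M _ h11 hs31 (by omega), if_neg (by omega),
      mul_coeff_aux _ _ M M _ h31 hs11 (by omega), if_neg (by omega)] at hk
    rw [hσ] at hk
    have : (-1 : K) ^ M' * ((C 1 0).coeff M' * (C 1 0).coeff M') = 0 := by linear_combination hk
    exact (mul_ne_zero hεM' (mul_ne_zero h21top h21top)) this
  -- M ≤ M'
  have hge : M ≤ M' := by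
    by_contra h
    push_neg at h
    have hk := key (M + M)
    rw [mul_coeff_aux _ _ M' M' _ h21 hs21 (by omega), if_neg (by omega),
      mul_coeff_aux _ _ M M _ h11 hs31 le_rfl, if_pos rfl,
      mul_coeff_aux _ _ M M _ h31 hs11 le_rfl, if_pos rfl] at hk
    rw [hσ, hσ] at hk
    have : (-1 : K) ^ M * (2 * ((C 0 0).coeff M * (C 2 0).coeff M)) = 0 := by linear_combination -hk
    exact (mul_ne_zero hεM (mul_ne_zero hch (mul_ne_zero h11top h31top))) this
  have hM : M' = M := le_antisymm hle hge
  subst hM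
  refine ⟨rfl, ?_⟩
  have hk := key (M' + M')
  rw [mul_coeff_aux _ _ M' M' _ h21 hs21 le_rfl, if_pos rfl,
    mul_coeff_aux _ _ M' M' _ h11 hs31 le_rfl, if_pos rfl,
    mul_coeff_aux _ _ M' M' _ h31 hs11 le_rfl, if_pos rfl] at hk
  rw [hσ, hσ, hσ] at hk
  apply mul_left_cancel₀ hεM'
  linear_combination hk
end

section
/- Every element of SU₃(K[z^{±1/2}]) whose (1,1)-entry is zero has the form: first row (0, 0, s₁₃) with s₁₃ a unit, (3,1)-entry σ'(s₁₃)^{−1}, (2,1)-entry 0, (1,2)-entry 0, (2,2)-entry −σ'(s₁₃)s₁₃^{−1}, and (2,3)-entry equal to −σ'(s₁₃ s₃₂), where s₃₂ is the (3,2)-entry; moreover s₃₂s₁₃σ'(s₃₂s₁₃) = s₃₃σ'(s₁₃) + σ'(s₃₃)s₁₃. -/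
open Matrix

/-- Every element of `SU₃(K[z^{±1/2}])` (here `S = K[z^{±1/2}]` is realized
as `AddMonoidAlgebra K ℤ`, `σ'` is the involution `(σ' s)ₙ = (−1)ⁿ sₙ`, and
`SU₃(S) = {C ∈ SL₃(S) : ᵀC J σ'(C) = J}` with `J = antidiag(−1,1,−1)`) whose
`(1,1)`-entry is zero has the form: first row `(0, 0, s₁₃)` with `s₁₃` a unit,
`(3,1)`-entry `σ'(s₁₃)⁻¹`, `(2,1)`-entry `0`, `(1,2)`-entry `0`, `(2,2)`-entry
`−σ'(s₁₃)s₁₃⁻¹`, `(2,3)`-entry `−σ'(s₁₃ s₃₂)` with `s₃₂` the `(3,2)`-entry; moreover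
`s₃₂s₁₃σ'(s₃₂s₁₃) = s₃₃σ'(s₁₃) + σ'(s₃₃)s₁₃`. -/
theorem stmt12
    (K : Type*) [Field K] (hch : (2 : K) ≠ 0)
    (σ' : AddMonoidAlgebra K ℤ ≃+* AddMonoidAlgebra K ℤ)
    (hσ : ∀ (s : AddMonoidAlgebra K ℤ) (n : ℤ), (σ' s).coeff n = (-1 : K) ^ n * s.coeff n)
    (J : Matrix (Fin 3) (Fin 3) (AddMonoidAlgebra K ℤ))
    (hJ : J = !![0, 0, -1; 0, 1, 0; -1, 0, 0])
    (C : Matrix (Fin 3) (Fin 3) (AddMonoidAlgebra K ℤ))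
    (hdet : C.det = 1)
    (hC : Cᵀ * J * C.map σ' = J)
    (hzero : C 0 0 = 0) :
    IsUnit (C 0 2) ∧
    C 2 0 = Ring.inverse (σ' (C 0 2)) ∧
    C 1 0 = 0 ∧
    C 0 1 = 0 ∧
    C 1 1 = -(σ' (C 0 2)) * Ring.inverse (C 0 2) ∧
    C 1 2 = -(σ' (C 0 2 * C 2 1)) ∧
    C 2 1 * C 0 2 * σ' (C 2 1 * C 0 2) = C 2 2 * σ' (C 0 2) + σ' (C 2 2) * C 0 2 := by
  have hinv : ∀ x : AddMonoidAlgebra K ℤ, σ' (σ' x) = x := by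
    intro x
    ext n
    rw [hσ, hσ, ← mul_assoc, ← mul_zpow, neg_mul_neg, one_mul, _root_.one_zpow, one_mul]
  have h00 := congrFun (congrFun hC 0) 0
  have h01 := congrFun (congrFun hC 0) 1
  have h02 := congrFun (congrFun hC 0) 2
  have h11 := congrFun (congrFun hC 1) 1
  have h21 := congrFun (congrFun hC 2) 1
  have h22 := congrFun (congrFun hC 2) 2
  simp [Matrix.mul_apply, Fin.sum_univ_three, hJ, hzero, Matrix.vecHead, Matrix.vecTail]
    at h00 h01 h02 h11 h21 h22
  rw [h00] at h01 h02
  simp at h01 h02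
  have hg0 : C 2 0 ≠ 0 := left_ne_zero_of_mul_eq_one h02
  have hC01 : C 0 1 = 0 := h01.resolve_left hg0
  rw [hC01, map_zero] at h11 h21
  simp only [mul_zero, zero_mul, neg_zero, zero_add, add_zero] at h11 h21
  -- h11 : C 1 1 * σ' (C 1 1) = 1 ; h21 : C 1 2 * σ' (C 1 1) + -(C 0 2 * σ' (C 2 1)) = 0
  have hsu : IsUnit (σ' (C 0 2)) := IsUnit.of_mul_eq_one (C 2 0) (by linear_combination h02)
  have huC : IsUnit (C 0 2) := by
    have h := hsu.map σ'.symm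
    rwa [RingEquiv.symm_apply_apply] at h
  have hσne : σ' (C 0 2) ≠ 0 := hsu.ne_zero
  have g2 : C 2 0 = Ring.inverse (σ' (C 0 2)) := by
    have h := Ring.inverse_mul_cancel _ hsu
    apply mul_right_cancel₀ hσne
    rw [h02, h]
  -- determinant
  rw [Matrix.det_fin_three, hzero, hC01, h00] at hdet
  ring_nf at hdet
  have key : C 1 1 * C 0 2 = -σ' (C 0 2) := by
    linear_combination -σ' (C 0 2) * hdet - C 1 1 * C 0 2 * h02
  have g5 : C 1 1 = -σ' (C 0 2) * Ring.inverse (C 0 2) := by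
    apply mul_right_cancel₀ huC.ne_zero
    rw [mul_assoc, Ring.inverse_mul_cancel _ huC, mul_one]
    linear_combination key
  have g6 : C 1 2 = -(σ' (C 0 2 * C 2 1)) := by
    rw [_root_.map_mul]
    linear_combination C 1 1 * h21 - C 1 2 * h11 + σ' (C 2 1) * key
  have g6' : C 1 2 = -(σ' (C 0 2) * σ' (C 2 1)) := by rw [g6, _root_.map_mul]
  have hs12 : σ' (C 1 2) = -(C 0 2 * C 2 1) := by rw [g6, map_neg, hinv]
  refine ⟨huC, g2, h00, hC01, g5, g6, ?_⟩
  rw [_root_.map_mul σ' (C 2 1) (C 0 2)]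
  linear_combination h22 - σ' (C 1 2) * g6' + σ' (C 0 2) * σ' (C 2 1) * hs12
end
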